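/- Let x_1, ..., x_T be vectors in R^d with ||x_t||_2 ≤ L for all t, and let A_t = λI_d + Σ_{j=1}^{t-1} x_j x_j^T with λ > 0. Then Σ_{t=1}^T min(1, x_t^T A_t^{-1} x_t) ≤ 2 d log(1 + T L² / (λ d)). -/

import Mathlib

open Matrix Finset

lemma aux_min_le {u : ℝ} (hu : 0 ≤ u) : min 1 u ≤ 2 * Real.log (1 + u) := by
  rcases le_total u 1 with h | h
  · rw [min_eq_right h]
    have h1 : 0 < 1 + u := by linarith
    have h2 : 1 - u/2 ≤ Real.exp (-(u/2)) := by
      have := Real.add_one_le_exp (-(u/2)); linarith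
    have h3 : Real.exp (u/2) * Real.exp (-(u/2)) = 1 := by
      rw [← Real.exp_add]; simp
    have key : Real.exp (u/2) ≤ 1 + u := by
      nlinarith [Real.exp_pos (u/2), Real.exp_pos (-(u/2)), sq_nonneg u]
    have := (Real.le_log_iff_exp_le h1).mpr key
    linarith
  · rw [min_eq_left h]
    have h2 : Real.log 2 ≤ Real.log (1 + u) :=
      Real.log_le_log (by norm_num) (by linarith)
    have := Real.log_two_gt_d9
    linarith

lemma aux_psd (d : ℕ) (v : Fin d → ℝ) : (vecMulVec v v).PosSemidef := by
  rw [vecMulVec_eq (Fin 1)]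
  have := Matrix.posSemidef_self_mul_conjTranspose (Matrix.replicateCol (Fin 1) v)
  rwa [Matrix.conjTranspose_replicateCol, star_trivial] at this

lemma aux_det_step {d : ℕ} (M : Matrix (Fin d) (Fin d) ℝ) (hM : M.PosDef) (v : Fin d → ℝ) :
    (M + vecMulVec v v).det = M.det * (1 + v ⬝ᵥ (M⁻¹ *ᵥ v)) := by
  erw [vecMulVec_eq (Fin 1),
    Matrix.det_add_mul (Matrix.replicateCol (Fin 1) v) (Matrix.replicateRow (Fin 1) v)
      (isUnit_iff_ne_zero.mpr hM.det_pos.ne')]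
  congr 1
  rw [Matrix.det_eq_elem_of_subsingleton _ 0, Matrix.add_apply, Matrix.one_apply_eq]
  congr 1
  rw [← Matrix.replicateRow_vecMul, Matrix.replicateRow_mul_replicateCol_apply _ _ _,
    ← Matrix.dotProduct_mulVec]

lemma aux_trace {d : ℕ} {M : Matrix (Fin d) (Fin d) ℝ} (hM : M.IsHermitian) :
    M.trace = ∑ i, hM.eigenvalues i := by
  nth_rewrite 1 [hM.spectral_theorem]
  rw [Unitary.conjStarAlgAut_apply, Matrix.trace_mul_cycle,
    (Matrix.mem_unitaryGroup_iff'.mp (hM.eigenvectorUnitary).2), one_mul, trace_diagonal]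
  simp

lemma aux_trace_vmv {d : ℕ} (v : Fin d → ℝ) : (vecMulVec v v).trace = v ⬝ᵥ v := by
  simp [Matrix.trace, Matrix.diag, vecMulVec_apply, dotProduct]

/-- Elliptical potential lemma. -/
theorem stmt_0 (d T : ℕ) (hd : 0 < d) (L lam : ℝ) (hlam : 0 < lam)
    (x : ℕ → Fin d → ℝ) (hx : ∀ t, Real.sqrt (x t ⬝ᵥ x t) ≤ L)
    (A : ℕ → Matrix (Fin d) (Fin d) ℝ)
    (hA : ∀ t, A t = lam • (1 : Matrix (Fin d) (Fin d) ℝ) +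
        ∑ j ∈ Finset.range t, vecMulVec (x j) (x j)) :
    ∑ t ∈ Finset.range T, min 1 (x t ⬝ᵥ ((A t)⁻¹ *ᵥ x t)) ≤
      2 * d * Real.log (1 + T * L ^ 2 / (lam * d)) := by
  haveI : Nonempty (Fin d) := ⟨⟨0, hd⟩⟩
  have hd' : (0:ℝ) < d := Nat.cast_pos.mpr hd
  have hL0 : 0 ≤ L := (Real.sqrt_nonneg _).trans (hx 0)
  have hxx : ∀ t, 0 ≤ x t ⬝ᵥ x t := fun t =>
    Finset.sum_nonneg fun i _ => mul_self_nonneg (x t i)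
  have hx2 : ∀ t, x t ⬝ᵥ x t ≤ L ^ 2 := fun t => by
    nlinarith [hx t, Real.sqrt_nonneg (x t ⬝ᵥ x t), Real.sq_sqrt (hxx t)]
  have hPSD : ∀ t, (∑ j ∈ Finset.range t, vecMulVec (x j) (x j)).PosSemidef := by
    intro t
    induction t with
    | zero => simpa using (Matrix.PosSemidef.zero :
        (0 : Matrix (Fin d) (Fin d) ℝ).PosSemidef)
    | succ n ih => rw [Finset.sum_range_succ]; exact ih.add (aux_psd d (x n))
  have hPD : ∀ t, (A t).PosDef := by
    intro t
    rw [hA t, Matrix.smul_one_eq_diagonal]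
    exact (Matrix.PosDef.diagonal fun _ => hlam).add_posSemidef (hPSD t)
  have hu0 : ∀ t, 0 ≤ x t ⬝ᵥ ((A t)⁻¹ *ᵥ x t) := fun t => by
    have := ((hPD t).inv).posSemidef.dotProduct_mulVec_nonneg (x t)
    simpa using this
  have hdet_step : ∀ t, (A (t+1)).det = (A t).det * (1 + x t ⬝ᵥ ((A t)⁻¹ *ᵥ x t)) := by
    intro t
    have h : A (t+1) = A t + vecMulVec (x t) (x t) := by
      rw [hA (t+1), hA t, Finset.sum_range_succ, add_assoc]
    rw [h, aux_det_step _ (hPD t)]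
  have hdet0 : (A 0).det = lam ^ d := by
    rw [hA 0]
    simp [Matrix.det_smul]
  have hlogdet : ∀ t, Real.log ((A t).det) =
      d * Real.log lam + ∑ j ∈ Finset.range t, Real.log (1 + x j ⬝ᵥ ((A j)⁻¹ *ᵥ x j)) := by
    intro t
    induction t with
    | zero => simp [hdet0, Real.log_pow]
    | succ n ih =>
        have hpos : (0:ℝ) < 1 + x n ⬝ᵥ ((A n)⁻¹ *ᵥ x n) := by linarith [hu0 n]
        rw [hdet_step n, Real.log_mul (hPD n).det_pos.ne' hpos.ne', ih,
          Finset.sum_range_succ]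
        ring
  -- trace bound
  have htr : (A T).trace ≤ lam * d + T * L ^ 2 := by
    rw [hA T, Matrix.trace_add, Matrix.trace_smul, Matrix.trace_one, Matrix.trace_sum]
    have h1 : ∑ j ∈ Finset.range T, (vecMulVec (x j) (x j)).trace ≤ T * L ^ 2 := by
      calc ∑ j ∈ Finset.range T, (vecMulVec (x j) (x j)).trace
          ≤ ∑ j ∈ Finset.range T, L ^ 2 := by
            refine Finset.sum_le_sum fun j _ => ?_
            rw [aux_trace_vmv]; exact hx2 j
        _ = T * L ^ 2 := by rw [Finset.sum_const, Finset.card_range]; ring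
    have h2 : lam • (Fintype.card (Fin d) : ℝ) = lam * d := by
      simp [smul_eq_mul]
    rw [h2]
    linarith
  -- eigenvalues
  have hμpos : ∀ i, 0 < (hPD T).1.eigenvalues i := (hPD T).eigenvalues_pos
  have htr2 : (A T).trace = ∑ i, (hPD T).1.eigenvalues i := aux_trace (hPD T).1
  have hdetT : (A T).det = ∏ i, (hPD T).1.eigenvalues i := by
    rw [(hPD T).1.det_eq_prod_eigenvalues]; rfl
  have htrpos : 0 < (A T).trace := by
    rw [htr2]; exact Finset.sum_pos (fun i _ => hμpos i) Finset.univ_nonempty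
  -- Jensen
  have hJ : Real.log ((A T).det) ≤ d * Real.log ((A T).trace / d) := by
    have hw : ∑ _i : Fin d, (1/(d:ℝ)) = 1 := by
      rw [Finset.sum_const, Finset.card_univ, Fintype.card_fin, nsmul_eq_mul]
      field_simp
    have hcs := (strictConcaveOn_log_Ioi.concaveOn).le_map_sum
      (t := Finset.univ) (w := fun _ : Fin d => 1/(d:ℝ))
      (p := (hPD T).1.eigenvalues)
      (fun i _ => by positivity) hw (fun i _ => Set.mem_Ioi.mpr (hμpos i))
    have e1 : ∑ i : Fin d, (1/(d:ℝ)) • Real.log ((hPD T).1.eigenvalues i)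
        = (1/(d:ℝ)) * ∑ i, Real.log ((hPD T).1.eigenvalues i) := by
      rw [← Finset.smul_sum]; rfl
    have e2 : ∑ i : Fin d, (1/(d:ℝ)) • (hPD T).1.eigenvalues i
        = (A T).trace / d := by
      rw [← Finset.smul_sum, ← htr2, smul_eq_mul]; ring
    rw [e1, e2] at hcs
    rw [hdetT, Real.log_prod fun i _ => (hμpos i).ne']
    calc ∑ i, Real.log ((hPD T).1.eigenvalues i)
        = d * ((1/(d:ℝ)) * ∑ i, Real.log ((hPD T).1.eigenvalues i)) := by
          field_simp
      _ ≤ d * Real.log ((A T).trace / d) :=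
          mul_le_mul_of_nonneg_left hcs hd'.le
  have hlogT : Real.log ((A T).det) ≤ d * Real.log (lam + T * L ^ 2 / d) := by
    refine hJ.trans (mul_le_mul_of_nonneg_left ?_ hd'.le)
    apply Real.log_le_log (by positivity)
    rw [div_le_iff₀ hd']
    have : (lam + (T:ℝ) * L ^ 2 / d) * d = lam * d + T * L ^ 2 := by field_simp
    linarith
  -- combine
  have ha : (0:ℝ) < lam + T * L ^ 2 / d := by positivity
  calc ∑ t ∈ Finset.range T, min 1 (x t ⬝ᵥ ((A t)⁻¹ *ᵥ x t))
      ≤ ∑ t ∈ Finset.range T, 2 * Real.log (1 + x t ⬝ᵥ ((A t)⁻¹ *ᵥ x t)) :=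
        Finset.sum_le_sum fun t _ => aux_min_le (hu0 t)
    _ = 2 * (Real.log ((A T).det) - d * Real.log lam) := by
        rw [← Finset.mul_sum, hlogdet T]; ring
    _ ≤ 2 * (d * Real.log (lam + T * L ^ 2 / d) - d * Real.log lam) := by
        linarith
    _ = 2 * d * Real.log (1 + T * L ^ 2 / (lam * d)) := by
        rw [show 2*((d:ℝ) * Real.log (lam + T * L ^ 2 / d) - d * Real.log lam)
            = 2 * d * (Real.log (lam + T * L ^ 2 / d) - Real.log lam) from by ring,
          ← Real.log_div ha.ne' hlam.ne']
        have heq : (lam + (T:ℝ) * L ^ 2 / d) / lam = 1 + T * L ^ 2 / (lam * d) := by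
          rw [add_div, div_self hlam.ne']
          ring
        rw [heq]
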